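/- Let $(N,\phi)$ be an isocrystal over $\breve F$ of dimension $n$, where $\phi$ is a $\sigma$-linear automorphism isoclinic of slope $1/n$ (equivalently, topologically nilpotent with $\phi^n$ having the same lattice-behavior as multiplication by the uniformizer $\pi$). Let $M\subset N$ be an $O_{\breve F}$-lattice with $\phi(M)\subset M$ and $[M:\phi(M)] = 1$. Then all inclusions in the chain $M \supset \phi(M) \supset \phi^2(M)+\pi M \supset \phi^3(M)+\pi M \supset \cdots \supset \phi^n(M)+\pi M$ are strict, and consequently $\phi^n(M)=\pi M$. -/

import Mathlib

/-!
Since `M/φ(M)` is simple, it is killed by `π`, so `πM ⊆ φ(M)` and `M = φ(M) + O x` for a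
single vector `x`; applying `φᵏ` gives `φᵏ(M) = φᵏ⁺¹(M) + O φᵏ(x)`. Put `Dₖ = φᵏ(M) + πM`.
As `φ(πM) = πφ(M) ⊆ πM`, an equality `Dₖ₊₁ = Dₖ` persists along the chain, so topological
nilpotence forces `Dₖ = πM`. But `M = Dₖ + ⟨x, …, φᵏ⁻¹(x)⟩`, and by Nakayama `M` would then be
generated by `k < n` vectors. So the chain is strict, and a strict chain of length `n` from `M`
down to `πM` must end at `πM`, because `M/πM` has length `n`: this is `φⁿ(M) ⊆ πM`.
Conversely, `Dₖ₊₁` lies between `φᵏ⁺¹(M)` and `φᵏ(M)`, which differ by one vector killed by `π`,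
so it equals one of them; strictness rules out the latter, giving `πM ⊆ φᵏ⁺¹(M)` inductively.
-/

/-- The chain of lattices `M ⊇ φ(M) ⊇ φ²(M) ⊇ ⋯` : `iterImage φ M k = φᵏ(M)`. -/
def iterImage {O N : Type*} [CommRing O] [AddCommGroup N] [Module O N]
    {σ : O →+* O} [RingHomSurjective σ] (φ : N →ₛₗ[σ] N) (M : Submodule O N) :
    ℕ → Submodule O N
  | 0 => M
  | k + 1 => Submodule.map φ (iterImage φ M k)

/-- The chain `M ⊃ φ(M) ⊃ φ²(M) + πM ⊃ φ³(M) + πM ⊃ ⋯`. -/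
def chainD {O N : Type*} [CommRing O] [AddCommGroup N] [Module O N]
    {σ : O →+* O} [RingHomSurjective σ] (π : O) (φ : N →ₛₗ[σ] N)
    (M : Submodule O N) : ℕ → Submodule O N
  | 0 => M
  | 1 => Submodule.map φ M
  | (k + 2) => iterImage φ M (k + 2) ⊔ Ideal.span {π} • M

open Submodule IsLocalRing
open scoped TensorProduct

theorem Order.coheight_add_le_coheight_of_forall_lt {α : Type*} [Preorder α] {a : ℕ → α}
    {n : ℕ} (ha : ∀ k < n, a (k + 1) < a k) :
    Order.coheight (a 0) + n ≤ Order.coheight (a n) := by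
  induction n with
  | zero => simp
  | succ n ih =>
    calc Order.coheight (a 0) + ↑(n + 1) = Order.coheight (a 0) + n + 1 := by push_cast; ring
      _ ≤ Order.coheight (a n) + 1 := by gcongr; exact ih fun k hk => ha k (by omega)
      _ ≤ Order.coheight (a (n + 1)) := Order.coheight_add_one_le (ha n n.lt_succ_self)

theorem Submodule.map_ideal_smul {R S N N' : Type*} [CommRing R] [CommRing S]
    [AddCommGroup N] [Module R N] [AddCommGroup N'] [Module S N'] {σ : R →+* S}
    [RingHomSurjective σ] (f : N →ₛₗ[σ] N') (I : Ideal R) (L : Submodule R N) :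
    (I • L).map f = I.map σ • L.map f := by
  apply le_antisymm
  · rw [map_le_iff_le_comap]
    refine smul_le.mpr fun r hr l hl => ?_
    rw [mem_comap, map_smulₛₗ]
    exact smul_mem_smul (Ideal.mem_map_of_mem σ hr) (mem_map_of_mem hl)
  · refine smul_le.mpr fun s hs z hz => ?_
    obtain ⟨r, hr, rfl⟩ := (Ideal.mem_map_iff_of_surjective σ σ.surjective).mp hs
    obtain ⟨l, hl, rfl⟩ := hz
    rw [← map_smulₛₗ]
    exact mem_map_of_mem (smul_mem_smul hr hl)

theorem Submodule.exists_eq_sup_span_singleton_of_isSimpleModule {R N : Type*} [Ring R]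
    [AddCommGroup N] [Module R N] {L M : Submodule R N} (hLM : L ≤ M)
    [IsSimpleModule R (M ⧸ comap M.subtype L)] : ∃ x, M = L ⊔ span R {x} := by
  have hcov : L ⋖ M := (covBy_iff_quot_is_simple hLM).mpr inferInstance
  obtain ⟨x, hxM, hxL⟩ := SetLike.exists_of_lt hcov.lt
  refine ⟨x, ((hcov.eq_or_eq le_sup_left (sup_le hLM ?_)).resolve_left fun h => ?_).symm⟩
  · exact (span_singleton_le_iff_mem x M).mpr hxM
  · exact hxL (h ▸ mem_sup_right (mem_span_singleton_self x))

section LocalRing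

variable {R N : Type*} [CommRing R] [IsLocalRing R] [AddCommGroup N] [Module R N]

theorem maximalIdeal_smul_le_of_isSimpleModule {L M : Submodule R N}
    [IsSimpleModule R (M ⧸ comap M.subtype L)] : maximalIdeal R • M ≤ L := by
  have hann : Module.annihilator R (M ⧸ comap M.subtype L) = maximalIdeal R :=
    eq_maximalIdeal IsSimpleModule.annihilator_isMaximal
  refine smul_le.mpr fun r hr l hl => ?_
  rw [← hann] at hr
  have h := Module.mem_annihilator.mp hr (Submodule.Quotient.mk ⟨l, hl⟩)
  rwa [← Submodule.Quotient.mk_smul, Submodule.Quotient.mk_eq_zero] at h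

theorem eq_or_eq_sup_span_singleton_of_le {A B : Submodule R N} {y : N}
    (hy : ∀ r ∈ maximalIdeal R, r • y ∈ A) (hAB : A ≤ B) (hB : B ≤ A ⊔ span R {y}) :
    B = A ∨ B = A ⊔ span R {y} := by
  by_cases hyB : y ∈ B
  · exact Or.inr (le_antisymm hB (sup_le hAB ((span_singleton_le_iff_mem y B).mpr hyB)))
  refine Or.inl (le_antisymm (fun v hv => ?_) hAB)
  obtain ⟨a, ha, z, hz, rfl⟩ := mem_sup.mp (hB hv)
  obtain ⟨c, rfl⟩ := mem_span_singleton.mp hz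
  by_cases hc : IsUnit c
  · have hcy : c • y ∈ B := by simpa using B.sub_mem hv (hAB ha)
    exact absurd ((B.smul_mem_iff_of_isUnit hc).mp hcy) hyB
  · exact A.add_mem ha (hy c ((mem_maximalIdeal c).mpr hc))

theorem card_le_card_of_le_maximalIdeal_smul_sup_span {M : Submodule R N} {ι : Type*}
    [Fintype ι] (b : Module.Basis ι R M) (s : Finset N)
    (h : M ≤ maximalIdeal R • M ⊔ span R s) : Fintype.card ι ≤ s.card := by
  have := Module.Finite.of_basis b
  have hM : M ≤ span R s := le_of_le_smul_of_le_jacobson_bot (Module.Finite.iff_fg.mp this)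
    (jacobson_eq_maximalIdeal ⊥ bot_ne_top).ge (by rwa [sup_comm])
  calc Fintype.card ι = Module.finrank R M := (Module.finrank_eq_card_basis b).symm
    _ ≤ Module.finrank R (span R (s : Set N)) := finrank_mono hM
    _ ≤ s.card := finrank_span_finset_le_card s

theorem length_quotient_maximalIdeal_smul_top {X ι : Type*} [AddCommGroup X] [Module R X]
    [Fintype ι] (b : Module.Basis ι R X) :
    Module.length R (X ⧸ maximalIdeal R • (⊤ : Submodule R X)) = Fintype.card ι := by
  let _ := Ideal.Quotient.field (maximalIdeal R)
  let e : (R ⧸ maximalIdeal R) ⊗[R] X ≃ₗ[R ⧸ maximalIdeal R]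
      X ⧸ maximalIdeal R • (⊤ : Submodule R X) :=
    (TensorProduct.quotTensorEquivQuotSMul X _).extendScalarsOfSurjective
      Ideal.Quotient.mk_surjective
  let b' := b.baseChange (R ⧸ maximalIdeal R)
  have := Module.Finite.of_basis b'
  rw [Module.length_eq_of_surjective (R := R ⧸ maximalIdeal R) Ideal.Quotient.mk_surjective,
    ← e.length_eq, Module.length_eq_finrank, Module.finrank_eq_card_basis b']

theorem coheight_maximalIdeal_smul {M : Submodule R N} {ι : Type*} [Fintype ι]
    (b : Module.Basis ι R M) :
    Order.coheight (⟨maximalIdeal R • M, smul_le_right⟩ : Set.Iic M) = Fintype.card ι := by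
  have h : M.mapIic (maximalIdeal R • ⊤) = ⟨maximalIdeal R • M, smul_le_right⟩ := by
    ext1; simp [map_smul'']
  rw [← h, Order.coheight_orderIso, ← Module.length_quotient,
    length_quotient_maximalIdeal_smul_top b]

theorem eq_maximalIdeal_smul_of_chain {M : Submodule R N} {n : ℕ}
    (b : Module.Basis (Fin n) R M) {E : ℕ → Submodule R N} (hEM : ∀ k, E k ≤ M)
    (hmE : ∀ k, maximalIdeal R • M ≤ E k) (hE : ∀ k < n, E (k + 1) < E k) :
    E n = maximalIdeal R • M := by
  refine (((hmE n).lt_or_eq).resolve_left fun hlt => ?_).symm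
  have hchain := Order.coheight_add_le_coheight_of_forall_lt
    (a := fun k => (⟨E k, hEM k⟩ : Set.Iic M)) hE
  have hlast := Order.coheight_add_one_le (a := (⟨E n, hEM n⟩ : Set.Iic M))
    (b := ⟨maximalIdeal R • M, smul_le_right⟩) hlt
  rw [coheight_maximalIdeal_smul b, Fintype.card_fin] at hlast
  have : ((n + 1 : ℕ) : ℕ∞) ≤ n := by
    push_cast
    exact le_trans (by gcongr; exact le_add_self.trans hchain) hlast
  exact n.not_succ_le_self (Nat.cast_le.mp this)

end LocalRing

section iterImage

variable {R N : Type*} [CommRing R] [AddCommGroup N] [Module R N] {σ : R →+* R}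
  [RingHomSurjective σ] {φ : N →ₛₗ[σ] N} {M P : Submodule R N}

theorem iterImage_add (M : Submodule R N) (j k : ℕ) :
    iterImage φ M (j + k) = iterImage φ (iterImage φ M j) k := by
  induction k with
  | zero => rfl
  | succ k ih => exact congrArg (map φ) ih

theorem iterImage_mono (h : M ≤ P) (k : ℕ) : iterImage φ M k ≤ iterImage φ P k := by
  induction k with
  | zero => exact h
  | succ k ih => exact map_mono ih

theorem iterImage_antitone (hM : M.map φ ≤ M) : Antitone (iterImage φ M) :=
  antitone_nat_of_succ_le fun k => by
    rw [add_comm, iterImage_add]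
    exact iterImage_mono hM k

theorem iterImage_le (hM : M.map φ ≤ M) (k : ℕ) : iterImage φ M k ≤ M :=
  iterImage_antitone hM k.zero_le

theorem chainD_eq_iterImage_sup {π : R} (hπ : Ideal.span {π} • M ≤ M.map φ)
    (hM : M.map φ ≤ M) : ∀ k, chainD π φ M k = iterImage φ M k ⊔ Ideal.span {π} • M
  | 0 => (sup_eq_left.mpr (hπ.trans hM)).symm
  | 1 => (sup_eq_left.mpr hπ).symm
  | _ + 2 => rfl

theorem iterImage_ideal_smul {I : Ideal R} (hI : I.map σ = I) (k : ℕ) :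
    iterImage φ (I • M) k = I • iterImage φ M k := by
  induction k with
  | zero => rfl
  | succ k ih => rw [iterImage, ih, map_ideal_smul, hI]; rfl

theorem iterImage_eq_sup_span_iterate {x : N} (hx : M = M.map φ ⊔ span R {x}) (k : ℕ) :
    iterImage φ M k = iterImage φ M (k + 1) ⊔ span R {φ^[k] x} := by
  induction k with
  | zero => exact hx
  | succ k ih =>
    rw [iterImage, ih, Submodule.map_sup, map_span, Set.image_singleton,
      ← Function.iterate_succ_apply' φ]
    rfl

theorem le_iterImage_sup_span_iterate [DecidableEq N] {x : N} (hx : M = M.map φ ⊔ span R {x})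
    (k : ℕ) :
    M ≤ iterImage φ M k ⊔ span R ((Finset.range k).image (φ^[·] x)) := by
  induction k with
  | zero => exact le_sup_left
  | succ k ih =>
    rw [Finset.range_add_one, Finset.image_insert, Finset.coe_insert, span_insert, ← sup_assoc,
      ← iterImage_eq_sup_span_iterate hx]
    exact ih

theorem iterImage_succ_le_sup (hP : P.map φ ≤ P) {k : ℕ}
    (h : iterImage φ M k ≤ iterImage φ M (k + 1) ⊔ P) :
    iterImage φ M (k + 1) ≤ iterImage φ M (k + 2) ⊔ P :=
  calc iterImage φ M (k + 1) = (iterImage φ M k).map φ := rfl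
    _ ≤ (iterImage φ M (k + 1) ⊔ P).map φ := map_mono h
    _ = iterImage φ M (k + 2) ⊔ P.map φ := Submodule.map_sup _ _ _
    _ ≤ iterImage φ M (k + 2) ⊔ P := sup_le_sup_left hP _

theorem iterImage_le_of_le_succ_sup (hP : P.map φ ≤ P) {j k : ℕ} (hj : iterImage φ M j ≤ P)
    (h : iterImage φ M k ≤ iterImage φ M (k + 1) ⊔ P) : iterImage φ M k ≤ P := by
  have hstable : ∀ m, iterImage φ M k ≤ iterImage φ M (k + m) ⊔ P := by
    intro m
    induction m generalizing k with
    | zero => exact le_sup_left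
    | succ m ih =>
      refine h.trans (sup_le ?_ le_sup_right)
      rw [show k + (m + 1) = k + 1 + m by omega]
      exact ih (iterImage_succ_le_sup hP h)
  refine (hstable j).trans (sup_le ?_ le_rfl)
  rw [add_comm, iterImage_add]
  exact (iterImage_mono hj k).trans (iterImage_le hP k)

end iterImage

section IsocrystalChain

variable {R N : Type*} [CommRing R] [IsLocalRing R] [AddCommGroup N] [Module R N]
  {σ : R →+* R} [RingHomSurjective σ] {φ : N →ₛₗ[σ] N} {M : Submodule R N} {x : N} {n : ℕ}

theorem iterImage_succ_sup_lt (b : Module.Basis (Fin n) R M)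
    (hσ : (maximalIdeal R).map σ = maximalIdeal R) (hx : M = M.map φ ⊔ span R {x}) {j : ℕ}
    (hj : iterImage φ M j ≤ maximalIdeal R • M) {k : ℕ} (hk : k < n) :
    iterImage φ M (k + 1) ⊔ maximalIdeal R • M < iterImage φ M k ⊔ maximalIdeal R • M := by
  classical
  have hM : M.map φ ≤ M := le_sup_left.trans hx.ge
  refine lt_of_le_of_ne (sup_le_sup_right (iterImage_antitone hM k.le_succ) _) fun h => ?_
  have hφm : (maximalIdeal R • M).map φ ≤ maximalIdeal R • M := by
    rw [map_ideal_smul, hσ]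
    exact smul_mono_right _ hM
  have hk_le : iterImage φ M k ≤ maximalIdeal R • M :=
    iterImage_le_of_le_succ_sup hφm hj (h ▸ le_sup_left)
  have hcard := card_le_card_of_le_maximalIdeal_smul_sup_span b _
    ((le_iterImage_sup_span_iterate hx k).trans (sup_le_sup_right hk_le _))
  rw [Fintype.card_fin] at hcard
  exact hk.not_ge (hcard.trans (Finset.card_image_le.trans (Finset.card_range k).le))

theorem maximalIdeal_smul_le_iterImage (hσ : (maximalIdeal R).map σ = maximalIdeal R)
    (hmφ : maximalIdeal R • M ≤ M.map φ) (hx : M = M.map φ ⊔ span R {x})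
    (hlt : ∀ k < n,
      iterImage φ M (k + 1) ⊔ maximalIdeal R • M < iterImage φ M k ⊔ maximalIdeal R • M) :
    maximalIdeal R • M ≤ iterImage φ M n := by
  induction n with
  | zero => exact smul_le_right
  | succ k ih =>
    have hmk := ih fun i hi => hlt i (by omega)
    have hy : ∀ r ∈ maximalIdeal R, r • φ^[k] x ∈ iterImage φ M (k + 1) := by
      intro r hr
      have hyk : φ^[k] x ∈ iterImage φ M k := by
        rw [iterImage_eq_sup_span_iterate hx k]
        exact mem_sup_right (mem_span_singleton_self _)
      have := smul_mem_smul hr hyk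
      rw [← iterImage_ideal_smul hσ] at this
      rw [add_comm, iterImage_add]
      exact iterImage_mono hmφ k this
    rcases eq_or_eq_sup_span_singleton_of_le hy le_sup_left
      (sup_le le_sup_left (hmk.trans (iterImage_eq_sup_span_iterate hx k).le)) with h | h
    · exact h ▸ le_sup_right
    · rw [← iterImage_eq_sup_span_iterate hx k, ← sup_eq_left.mpr hmk] at h
      exact absurd h (hlt k k.lt_succ_self).ne

end IsocrystalChain

theorem isocrystal_chain_strict_and_phi_pow_eq_general
    {O : Type*} [CommRing O] [IsDomain O] [IsDiscreteValuationRing O]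
    (π : O) (hπ : Irreducible π)
    {N : Type*} [AddCommGroup N] [Module O N]
    (σ : O →+* O) [RingHomSurjective σ] (hσ : Function.Bijective σ)
    (φ : N →ₛₗ[σ] N)
    (M : Submodule O N) (n : ℕ)
    (bM : Module.Basis (Fin n) O ↥M)
    (hsub : Submodule.map φ M ≤ M)
    (hcolength_one :
      IsSimpleModule O (↥M ⧸ Submodule.comap M.subtype (Submodule.map φ M)))
    (htop_nilpotent : ∃ j : ℕ, iterImage φ M j ≤ Ideal.span {π} • M) :
    (∀ k < n, chainD π φ M (k + 1) < chainD π φ M k) ∧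
    iterImage φ M n = Ideal.span {π} • M := by
  obtain ⟨j, hj⟩ := htop_nilpotent
  have hπm : Ideal.span {π} = maximalIdeal O :=
    ((IsDiscreteValuationRing.irreducible_iff_uniformizer π).mp hπ).symm
  have hσm : (maximalIdeal O).map σ = maximalIdeal O :=
    eq_maximalIdeal ((Ideal.isMaximal_map_iff_of_bijective σ hσ).mpr inferInstance)
  have hmφ : maximalIdeal O • M ≤ M.map φ := maximalIdeal_smul_le_of_isSimpleModule
  obtain ⟨x, hx⟩ := exists_eq_sup_span_singleton_of_isSimpleModule hsub
  rw [hπm] at hj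
  have hlt := fun k (hk : k < n) => iterImage_succ_sup_lt bM hσm hx hj hk
  refine ⟨fun k hk => ?_, ?_⟩
  · simpa only [chainD_eq_iterImage_sup (hπm ▸ hmφ) hsub, hπm] using hlt k hk
  · have hDn := eq_maximalIdeal_smul_of_chain bM
      (E := fun k => iterImage φ M k ⊔ maximalIdeal O • M)
      (fun k => sup_le (iterImage_le hsub k) smul_le_right) (fun _ => le_sup_right) hlt
    rw [hπm]
    exact le_antisymm (le_sup_left.trans hDn.le) (maximalIdeal_smul_le_iterImage hσm hmφ hx hlt)

/-- Let `O` be a complete DVR with uniformizer `π` and Frobenius-like ring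
automorphism `σ`, and let `(N, φ)` be an isocrystal with `φ` a `σ`-semilinear
bijection which is isoclinic of slope `1/n`; in particular `φ` is topologically
nilpotent. Let `M` be a lattice of rank `n` (a free `O`-submodule with basis `Fin n`)
with `φ(M) ⊆ M` of colength `1` (i.e. `M/φ(M)` is a simple `O`-module). Then all
inclusions in the chain `M ⊃ φ(M) ⊃ φ²(M)+πM ⊃ ⋯ ⊃ φⁿ(M)+πM` are strict, and
consequently `φⁿ(M) = πM`. -/
theorem isocrystal_chain_strict_and_phi_pow_eq
    {O : Type*} [CommRing O] [IsDomain O] [IsDiscreteValuationRing O]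
    (π : O) (hπ : Irreducible π)
    {N : Type*} [AddCommGroup N] [Module O N]
    (σ : O →+* O) [RingHomSurjective σ] (hσ : Function.Bijective σ)
    (φ : N →ₛₗ[σ] N) (hφ : Function.Bijective φ)
    (M : Submodule O N) (n : ℕ) (hn : 0 < n)
    (bM : Module.Basis (Fin n) O ↥M)
    (hsub : Submodule.map φ M ≤ M)
    (hcolength_one :
      IsSimpleModule O (↥M ⧸ Submodule.comap M.subtype (Submodule.map φ M)))
    (htop_nilpotent : ∃ j : ℕ, iterImage φ M j ≤ Ideal.span {π} • M) :
    (∀ k < n, chainD π φ M (k + 1) < chainD π φ M k) ∧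
    iterImage φ M n = Ideal.span {π} • M :=
  isocrystal_chain_strict_and_phi_pow_eq_general π hπ σ hσ φ M n bM hsub hcolength_one
    htop_nilpotent
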